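/- Let Y be a Hausdorff paracompact topological space of finite covering dimension, meaning there exists N ∈ ℕ such that every open cover of Y admits an open refinement in which each point of Y lies in at most N members. Let 𝒮 be a sheaf of rings on Y, M a sheaf of 𝒮-modules, and N₀ ∈ ℕ. Suppose every x ∈ Y has an open neighbourhood U on which M is free of rank N₀, i.e. there are sections e₁, …, e_{N₀} ∈ M(U) such that for every open V ⊆ U the map 𝒮(V)^{N₀} → M(V), (a₁,…,a_{N₀}) ↦ Σᵢ aᵢ·(eᵢ|_V), is bijective. Then there is a finite open cover U₁, …, U_k of Y such that M is free of rank N₀ (in the same sense) on each Uᵢ. -/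

import Mathlib

open CategoryTheory TopologicalSpace Opposite

universe u_2 u_3

/-- A sheaf of rings together with a sheaf of modules over it, on a topological space. -/
structure SheafModulePair (Y : TopCat) where
  /-- the sheaf of rings -/
  S : TopCat.Sheaf RingCat.{u_2} Y
  /-- the sheaf of abelian groups underlying the sheaf of modules -/
  M : TopCat.Sheaf AddCommGrpCat.{u_3} Y
  /-- module structures on the sections -/
  mod : ∀ U : Opens Y, Module (S.val.obj (op U)) (M.val.obj (op U))
  /-- compatibility of the scalar multiplication with restriction -/
  map_smul : ∀ {U V : Opens Y} (h : V ≤ U) (r : S.val.obj (op U)) (m : M.val.obj (op U)),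
    M.val.map (homOfLE h).op (mod U |>.smul r m) =
      (mod V).smul (S.val.map (homOfLE h).op r) (M.val.map (homOfLE h).op m)

attribute [instance] SheafModulePair.mod

namespace SheafModulePair

variable {Y : TopCat} (D : SheafModulePair Y)

/-- `M` is free of rank `N` on the open set `U`: there are sections `e₁, …, e_N` of `M`
over `U` such that on every open `V ⊆ U` the induced map `𝒮(V)^N → M(V)` is bijective. -/
def IsFreeOfRankOn (N : ℕ) (U : Opens Y) : Prop :=
  ∃ e : Fin N → D.M.val.obj (op U), ∀ V : Opens Y, ∀ h : V ≤ U,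
    Function.Bijective (fun a : Fin N → D.S.val.obj (op V) =>
      ∑ i : Fin N, a i • D.M.val.map (homOfLE h).op (e i))

end SheafModulePair

/-- A topological space has covering dimension at most `N` if every open cover admits an
open refinement in which every point lies in at most `N` members. -/
def HasCoveringDimLE (Y : Type*) [TopologicalSpace Y] (N : ℕ) : Prop :=
  ∀ 𝒰 : Set (Set Y), (∀ U ∈ 𝒰, IsOpen U) → ⋃₀ 𝒰 = Set.univ →
    ∃ 𝒱 : Set (Set Y), (∀ V ∈ 𝒱, IsOpen V) ∧ ⋃₀ 𝒱 = Set.univ ∧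
      (∀ V ∈ 𝒱, ∃ U ∈ 𝒰, V ⊆ U) ∧
      ∀ y : Y, {V ∈ 𝒱 | y ∈ V}.Finite ∧ {V ∈ 𝒱 | y ∈ V}.ncard ≤ N


section Auxiliary

universe x u


noncomputable section

def uliftRE : ULift.{u} (FreeRing Unit) ≃+* FreeRing Unit :=
  { Equiv.ulift with map_mul' := fun _ _ => rfl, map_add' := fun _ _ => rfl }

def ER : RingCat.{u} := RingCat.of (ULift.{u} (FreeRing Unit))

def toHomS {R : RingCat.{u}} (r : R) : ER.{u} ⟶ R :=
  RingCat.ofHom ((FreeRing.lift (fun _ : Unit => r)).comp (uliftRE.toRingHom))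

def evS {R : RingCat.{u}} (φ : ER.{u} ⟶ R) : R :=
  φ (ULift.up (FreeRing.of Unit.unit))

lemma evS_toHomS {R : RingCat.{u}} (r : R) : evS (toHomS r) = r := by
  show (FreeRing.lift fun _ : Unit => r).comp (uliftRE.{u}.toRingHom) (ULift.up (FreeRing.of Unit.unit)) = r
  rw [RingHom.comp_apply]
  show (FreeRing.lift fun _ : Unit => r) (FreeRing.of Unit.unit) = r
  simp

lemma evS_inj {R : RingCat.{u}} (ψ χ : ER.{u} ⟶ R) (h : evS ψ = evS χ) : ψ = χ := by
  have h2 : (ψ.hom : ER.{u} →+* R).comp (uliftRE.symm.toRingHom) =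
      (χ.hom : ER.{u} →+* R).comp (uliftRE.symm.toRingHom) := by
    apply FreeRing.hom_ext
    intro ⟨⟩
    exact h
  have h3 := congrArg (fun f : FreeRing Unit →+* R => f.comp (uliftRE.toRingHom)) h2
  replace h3 : ψ.hom.comp ((uliftRE.symm.toRingHom).comp (uliftRE.{u}.toRingHom)) =
      χ.hom.comp ((uliftRE.symm.toRingHom).comp (uliftRE.{u}.toRingHom)) := h3
  have h4 : (uliftRE.symm.toRingHom).comp (uliftRE.{u}.toRingHom) = RingHom.id _ := by
    ext z; exact congrArg _ (uliftRE.symm_apply_apply z)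
  rw [h4] at h3
  exact RingCat.hom_ext h3

lemma evS_natural {R R' : RingCat.{u}} (f : R ⟶ R') (φ : ER.{u} ⟶ R) :
    evS (φ ≫ f) = f (evS φ) := rfl

lemma toHomS_natural {R R' : RingCat.{u}} (f : R ⟶ R') (r : R) :
    toHomS (f r) = toHomS r ≫ f := by
  apply evS_inj
  rw [evS_natural, evS_toHomS, evS_toHomS]

variable {X : TopCat.{x}} (F : TopCat.Sheaf RingCat.{u} X)

lemma ring_locally_eq {ι : Type x} (U : ι → Opens X) (V : Opens X) (hle : ∀ i, U i ≤ V)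
    (hV : V ≤ iSup U) (s t : F.val.obj (op V))
    (h : ∀ i, F.val.map (homOfLE (hle i)).op s = F.val.map (homOfLE (hle i)).op t) : s = t := by
  have hVU : V = iSup U := le_antisymm hV (iSup_le hle)
  subst hVU
  set G := F.val ⋙ coyoneda.obj (op ER.{u}) with hGdef
  have hUG : TopCat.Presheaf.IsSheafUniqueGluing G :=
    (TopCat.Presheaf.isSheaf_iff_isSheafUniqueGluing_types _).mp
      ((CategoryTheory.isSheaf_iff_isSheaf_of_type _ _).mpr (F.cond ER.{u}))
  set ψ : ∀ i, G.obj (op (U i)) := fun i => G.map (Opens.leSupr U i).op (toHomS s) with hψ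
  have compat : TopCat.Presheaf.IsCompatible G U ψ := by
    intro i j
    show toHomS s ≫ F.val.map (Opens.leSupr U i).op ≫ F.val.map (Opens.infLELeft (U i) (U j)).op =
      toHomS s ≫ F.val.map (Opens.leSupr U j).op ≫ F.val.map (Opens.infLERight (U i) (U j)).op
    rw [← F.val.map_comp, ← F.val.map_comp, ← op_comp, ← op_comp,
      Subsingleton.elim (Opens.infLELeft (U i) (U j) ≫ Opens.leSupr U i)
        (Opens.infLERight (U i) (U j) ≫ Opens.leSupr U j)]
  obtain ⟨φ, hglue, huniq⟩ := hUG U ψ compat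
  have hs : toHomS s = φ := huniq _ (fun i => rfl)
  have ht : toHomS t = φ := by
    apply huniq
    intro i
    show toHomS t ≫ F.val.map (Opens.leSupr U i).op = ψ i
    rw [← toHomS_natural]
    show toHomS (F.val.map (Opens.leSupr U i).op t) = toHomS s ≫ F.val.map (Opens.leSupr U i).op
    rw [← toHomS_natural]
    congr 1
    rw [Subsingleton.elim (Opens.leSupr U i) (homOfLE (hle i))]
    exact (h i).symm
  have := hs.trans ht.symm
  calc s = evS (toHomS s) := (evS_toHomS s).symm
    _ = evS (toHomS t) := by rw [this]
    _ = t := evS_toHomS t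

lemma ring_glue {ι : Type x} (U : ι → Opens X) (V : Opens X) (hle : ∀ i, U i ≤ V)
    (hV : V ≤ iSup U) (sf : ∀ i, F.val.obj (op (U i)))
    (compat : ∀ i j, F.val.map (homOfLE (inf_le_left : U i ⊓ U j ≤ U i)).op (sf i) =
      F.val.map (homOfLE (inf_le_right : U i ⊓ U j ≤ U j)).op (sf j)) :
    ∃ s : F.val.obj (op V), ∀ i, F.val.map (homOfLE (hle i)).op s = sf i := by
  have hVU : V = iSup U := le_antisymm hV (iSup_le hle)
  subst hVU
  set G := F.val ⋙ coyoneda.obj (op ER.{u}) with hGdef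
  have hUG : TopCat.Presheaf.IsSheafUniqueGluing G :=
    (TopCat.Presheaf.isSheaf_iff_isSheafUniqueGluing_types _).mp
      ((CategoryTheory.isSheaf_iff_isSheaf_of_type _ _).mpr (F.cond ER.{u}))
  set ψ : ∀ i, G.obj (op (U i)) := fun i => toHomS (sf i) with hψ
  have compat' : TopCat.Presheaf.IsCompatible G U ψ := by
    intro i j
    show toHomS (sf i) ≫ F.val.map (Opens.infLELeft (U i) (U j)).op =
      toHomS (sf j) ≫ F.val.map (Opens.infLERight (U i) (U j)).op
    rw [← toHomS_natural, ← toHomS_natural]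
    congr 1
    rw [Subsingleton.elim (Opens.infLELeft (U i) (U j)) (homOfLE inf_le_left),
      Subsingleton.elim (Opens.infLERight (U i) (U j)) (homOfLE inf_le_right)]
    exact compat i j
  obtain ⟨φ, hglue, -⟩ := hUG U ψ compat'
  refine ⟨evS φ, fun i => ?_⟩
  have : F.val.map (homOfLE (hle i)).op (evS φ) = evS (φ ≫ F.val.map (homOfLE (hle i)).op) := rfl
  rw [this]
  have h2 : φ ≫ F.val.map (homOfLE (hle i)).op = ψ i := by
    rw [Subsingleton.elim (homOfLE (hle i)) (Opens.leSupr U i)]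
    exact hglue i
  rw [h2]
  exact evS_toHomS (sf i)
end
noncomputable section Helpers

/-! ### Elements as morphisms, for `AddCommGrp` -/

def uliftAE : ULift.{u} ℤ ≃+ ℤ := { Equiv.ulift with map_add' := fun _ _ => rfl }

def EM : AddCommGrpCat.{u} := AddCommGrpCat.of (ULift.{u} ℤ)

def toHomM {A : AddCommGrpCat.{u}} (a : A) : EM.{u} ⟶ A :=
  AddCommGrpCat.ofHom (((zmultiplesHom A) a).comp (uliftAE.{u}.toAddMonoidHom))

def evM {A : AddCommGrpCat.{u}} (φ : EM.{u} ⟶ A) : A := φ (ULift.up 1)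

lemma evM_toHomM {A : AddCommGrpCat.{u}} (a : A) : evM (toHomM a) = a := by
  show ((zmultiplesHom A) a).comp (uliftAE.{u}.toAddMonoidHom) (ULift.up 1) = a
  rw [AddMonoidHom.comp_apply]
  show ((zmultiplesHom A) a) 1 = a
  simp

lemma evM_inj {A : AddCommGrpCat.{u}} (ψ χ : EM.{u} ⟶ A) (h : evM ψ = evM χ) : ψ = χ := by
  have h2 : (ψ.hom : EM.{u} →+ A).comp (uliftAE.{u}.symm.toAddMonoidHom) =
      (χ.hom : EM.{u} →+ A).comp (uliftAE.{u}.symm.toAddMonoidHom) := by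
    apply AddMonoidHom.ext_int
    exact h
  have h3 := congrArg (fun f : ℤ →+ A => f.comp (uliftAE.{u}.toAddMonoidHom)) h2
  replace h3 : ψ.hom.comp ((uliftAE.{u}.symm.toAddMonoidHom).comp (uliftAE.{u}.toAddMonoidHom)) =
      χ.hom.comp ((uliftAE.{u}.symm.toAddMonoidHom).comp (uliftAE.{u}.toAddMonoidHom)) := h3
  have h4 : (uliftAE.{u}.symm.toAddMonoidHom).comp (uliftAE.{u}.toAddMonoidHom) =
      AddMonoidHom.id _ := by
    ext z; exact congrArg _ (uliftAE.{u}.symm_apply_apply z)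
  rw [h4] at h3
  exact AddCommGrpCat.hom_ext h3

lemma evM_natural {A A' : AddCommGrpCat.{u}} (f : A ⟶ A') (φ : EM.{u} ⟶ A) :
    evM (φ ≫ f) = f (evM φ) := rfl

lemma toHomM_natural {A A' : AddCommGrpCat.{u}} (f : A ⟶ A') (a : A) :
    toHomM (f a) = toHomM a ≫ f := by
  apply evM_inj
  rw [evM_natural, evM_toHomM, evM_toHomM]

variable {X : TopCat.{x}} (F : TopCat.Sheaf AddCommGrpCat.{u} X)

lemma grp_locally_eq {ι : Type x} (U : ι → Opens X) (V : Opens X) (hle : ∀ i, U i ≤ V)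
    (hV : V ≤ iSup U) (s t : F.val.obj (op V))
    (h : ∀ i, F.val.map (homOfLE (hle i)).op s = F.val.map (homOfLE (hle i)).op t) : s = t := by
  have hVU : V = iSup U := le_antisymm hV (iSup_le hle)
  subst hVU
  set G := F.val ⋙ coyoneda.obj (op EM.{u}) with hGdef
  have hUG : TopCat.Presheaf.IsSheafUniqueGluing G :=
    (TopCat.Presheaf.isSheaf_iff_isSheafUniqueGluing_types _).mp
      ((CategoryTheory.isSheaf_iff_isSheaf_of_type _ _).mpr (F.cond EM.{u}))
  set ψ : ∀ i, G.obj (op (U i)) := fun i => G.map (Opens.leSupr U i).op (toHomM s) with hψ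
  have compat : TopCat.Presheaf.IsCompatible G U ψ := by
    intro i j
    show toHomM s ≫ F.val.map (Opens.leSupr U i).op ≫ F.val.map (Opens.infLELeft (U i) (U j)).op =
      toHomM s ≫ F.val.map (Opens.leSupr U j).op ≫ F.val.map (Opens.infLERight (U i) (U j)).op
    rw [← F.val.map_comp, ← F.val.map_comp, ← op_comp, ← op_comp,
      Subsingleton.elim (Opens.infLELeft (U i) (U j) ≫ Opens.leSupr U i)
        (Opens.infLERight (U i) (U j) ≫ Opens.leSupr U j)]
  obtain ⟨φ, hglue, huniq⟩ := hUG U ψ compat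
  have hs : toHomM s = φ := huniq _ (fun i => rfl)
  have ht : toHomM t = φ := by
    apply huniq
    intro i
    show toHomM t ≫ F.val.map (Opens.leSupr U i).op = ψ i
    rw [← toHomM_natural]
    show toHomM (F.val.map (Opens.leSupr U i).op t) = toHomM s ≫ F.val.map (Opens.leSupr U i).op
    rw [← toHomM_natural]
    congr 1
    rw [Subsingleton.elim (Opens.leSupr U i) (homOfLE (hle i))]
    exact (h i).symm
  have heq := hs.trans ht.symm
  calc s = evM (toHomM s) := (evM_toHomM s).symm
    _ = evM (toHomM t) := by rw [heq]
    _ = t := evM_toHomM t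

lemma grp_glue {ι : Type x} (U : ι → Opens X) (V : Opens X) (hle : ∀ i, U i ≤ V)
    (hV : V ≤ iSup U) (sf : ∀ i, F.val.obj (op (U i)))
    (compat : ∀ i j, F.val.map (homOfLE (inf_le_left : U i ⊓ U j ≤ U i)).op (sf i) =
      F.val.map (homOfLE (inf_le_right : U i ⊓ U j ≤ U j)).op (sf j)) :
    ∃ s : F.val.obj (op V), ∀ i, F.val.map (homOfLE (hle i)).op s = sf i := by
  have hVU : V = iSup U := le_antisymm hV (iSup_le hle)
  subst hVU
  set G := F.val ⋙ coyoneda.obj (op EM.{u}) with hGdef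
  have hUG : TopCat.Presheaf.IsSheafUniqueGluing G :=
    (TopCat.Presheaf.isSheaf_iff_isSheafUniqueGluing_types _).mp
      ((CategoryTheory.isSheaf_iff_isSheaf_of_type _ _).mpr (F.cond EM.{u}))
  set ψ : ∀ i, G.obj (op (U i)) := fun i => toHomM (sf i) with hψ
  have compat' : TopCat.Presheaf.IsCompatible G U ψ := by
    intro i j
    show toHomM (sf i) ≫ F.val.map (Opens.infLELeft (U i) (U j)).op =
      toHomM (sf j) ≫ F.val.map (Opens.infLERight (U i) (U j)).op
    rw [← toHomM_natural, ← toHomM_natural]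
    congr 1
    rw [Subsingleton.elim (Opens.infLELeft (U i) (U j)) (homOfLE inf_le_left),
      Subsingleton.elim (Opens.infLERight (U i) (U j)) (homOfLE inf_le_right)]
    exact compat i j
  obtain ⟨φ, hglue, -⟩ := hUG U ψ compat'
  refine ⟨evM φ, fun i => ?_⟩
  have h1 : F.val.map (homOfLE (hle i)).op (evM φ) = evM (φ ≫ F.val.map (homOfLE (hle i)).op) := rfl
  rw [h1]
  have h2 : φ ≫ F.val.map (homOfLE (hle i)).op = ψ i := by
    rw [Subsingleton.elim (homOfLE (hle i)) (Opens.leSupr U i)]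
    exact hglue i
  rw [h2]
  exact evM_toHomM (sf i)

end Helpers


noncomputable section ModuleLemmas

namespace SheafModulePair

variable {Y : TopCat.{x}} (D : SheafModulePair Y)

lemma map_smul' {U V : Opens Y} (h : V ≤ U) (r : D.S.val.obj (op U)) (m : D.M.val.obj (op U)) :
    D.M.val.map (homOfLE h).op (r • m) =
      (D.S.val.map (homOfLE h).op r) • (D.M.val.map (homOfLE h).op m) :=
  D.map_smul h r m

lemma M_res_res {W1 W2 W3 : Opens Y} (h12 : W2 ≤ W1) (h23 : W3 ≤ W2) (m : D.M.val.obj (op W1)) :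
    D.M.val.map (homOfLE h23).op (D.M.val.map (homOfLE h12).op m) =
      D.M.val.map (homOfLE (h23.trans h12)).op m := by
  rw [← CategoryTheory.comp_apply, ← Functor.map_comp]
  rfl

lemma S_res_res {W1 W2 W3 : Opens Y} (h12 : W2 ≤ W1) (h23 : W3 ≤ W2) (m : D.S.val.obj (op W1)) :
    D.S.val.map (homOfLE h23).op (D.S.val.map (homOfLE h12).op m) =
      D.S.val.map (homOfLE (h23.trans h12)).op m := by
  rw [← CategoryTheory.comp_apply, ← Functor.map_comp]
  rfl

lemma M_eq_of_le_bot {W : Opens Y} (hW : W ≤ ⊥) (s t : D.M.val.obj (op W)) : s = t := by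
  refine grp_locally_eq D.M (fun i : PEmpty => ⊥) W (fun i => i.elim) ?_ s t (fun i => i.elim)
  simpa using hW

lemma S_eq_of_le_bot {W : Opens Y} (hW : W ≤ ⊥) (s t : D.S.val.obj (op W)) : s = t := by
  refine ring_locally_eq D.S (fun i : PEmpty => ⊥) W (fun i => i.elim) ?_ s t (fun i => i.elim)
  simpa using hW

lemma freeMono {N : ℕ} {U U' : Opens Y} (h : D.IsFreeOfRankOn N U) (hle : U' ≤ U) :
    D.IsFreeOfRankOn N U' := by
  obtain ⟨e, he⟩ := h
  refine ⟨fun i => D.M.val.map (homOfLE hle).op (e i), fun V hV => ?_⟩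
  have key : ∀ i, D.M.val.map (homOfLE hV).op (D.M.val.map (homOfLE hle).op (e i)) =
      D.M.val.map (homOfLE (hV.trans hle)).op (e i) := fun i => D.M_res_res hle hV (e i)
  simp only [key]
  exact he V (hV.trans hle)

lemma isFreeOfRankOn_iSup {N : ℕ} {ι : Type x} (O : ι → Opens Y)
    (hdisj : ∀ i j, i ≠ j → O i ⊓ O j ≤ (⊥ : Opens Y))
    (hfree : ∀ i, D.IsFreeOfRankOn N (O i)) :
    D.IsFreeOfRankOn N (⨆ i, O i) := by
  classical
  choose e he using hfree
  have hcomp : ∀ n : Fin N, ∀ i j,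
      D.M.val.map (homOfLE (inf_le_left : O i ⊓ O j ≤ O i)).op (e i n) =
      D.M.val.map (homOfLE (inf_le_right : O i ⊓ O j ≤ O j)).op (e j n) := by
    intro n i j
    by_cases hij : i = j
    · subst hij
      rw [Subsingleton.elim (homOfLE (inf_le_left : O i ⊓ O i ≤ O i)) (homOfLE inf_le_right)]
    · exact D.M_eq_of_le_bot (hdisj i j hij) _ _
  have hEx : ∀ n : Fin N, ∃ En : D.M.val.obj (op (⨆ i, O i)),
      ∀ i, D.M.val.map (homOfLE (le_iSup O i)).op En = e i n :=
    fun n => grp_glue D.M O _ (le_iSup O) le_rfl (fun i => e i n) (hcomp n)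
  choose E hE using hEx
  refine ⟨E, fun V hV => ?_⟩
  set W : ι → Opens Y := fun i => V ⊓ O i with hWdef
  have hWle : ∀ i, W i ≤ V := fun i => inf_le_left
  have hWO : ∀ i, W i ≤ O i := fun i => inf_le_right
  have hVcov : V ≤ ⨆ i, W i := by
    intro z hz
    obtain ⟨i, hi⟩ := Opens.mem_iSup.mp (hV hz)
    exact Opens.mem_iSup.mpr ⟨i, ⟨hz, hi⟩⟩
  have hbij : ∀ i, Function.Bijective (fun a : Fin N → D.S.val.obj (op (W i)) =>
      ∑ n, a n • D.M.val.map (homOfLE (hWO i)).op (e i n)) :=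
    fun i => he i (W i) (hWO i)
  have hres : ∀ (a : Fin N → D.S.val.obj (op V)) (i : ι),
      D.M.val.map (homOfLE (hWle i)).op (∑ n, a n • D.M.val.map (homOfLE hV).op (E n)) =
      ∑ n, (D.S.val.map (homOfLE (hWle i)).op (a n)) •
        D.M.val.map (homOfLE (hWO i)).op (e i n) := by
    intro a i
    rw [map_sum]
    refine Finset.sum_congr rfl fun n _ => ?_
    rw [D.map_smul' (hWle i)]
    congr 1
    rw [D.M_res_res hV (hWle i), ← hE n i, D.M_res_res (le_iSup O i) (hWO i)]
  constructor
  · intro a b hab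
    funext n
    refine ring_locally_eq D.S W V hWle hVcov (a n) (b n) (fun i => ?_)
    have h1 := congrArg (D.M.val.map (homOfLE (hWle i)).op) hab
    rw [hres a i, hres b i] at h1
    have h2 := (hbij i).injective h1
    exact congrFun h2 n
  · intro m
    have hloc : ∀ i, ∃ b : Fin N → D.S.val.obj (op (W i)),
        ∑ n, b n • D.M.val.map (homOfLE (hWO i)).op (e i n) =
          D.M.val.map (homOfLE (hWle i)).op m := fun i => (hbij i).surjective _
    choose b hb using hloc
    have hbcomp : ∀ n : Fin N, ∀ i j,
        D.S.val.map (homOfLE (inf_le_left : W i ⊓ W j ≤ W i)).op (b i n) =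
        D.S.val.map (homOfLE (inf_le_right : W i ⊓ W j ≤ W j)).op (b j n) := by
      intro n i j
      by_cases hij : i = j
      · subst hij
        rw [Subsingleton.elim (homOfLE (inf_le_left : W i ⊓ W i ≤ W i)) (homOfLE inf_le_right)]
      · refine D.S_eq_of_le_bot (le_trans ?_ (hdisj i j hij)) _ _
        exact inf_le_inf (hWO i) (hWO j)
    have hgl : ∀ n : Fin N, ∃ an : D.S.val.obj (op V),
        ∀ i, D.S.val.map (homOfLE (hWle i)).op an = b i n :=
      fun n => ring_glue D.S W V hWle hVcov (fun i => b i n) (hbcomp n)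
    choose a ha using hgl
    refine ⟨a, ?_⟩
    refine grp_locally_eq D.M W V hWle hVcov _ m (fun i => ?_)
    rw [hres a i]
    simp only [ha]
    exact hb i

end SheafModulePair

end ModuleLemmas



lemma separation_lemma {Z : Type*} [TopologicalSpace Z] [NormalSpace Z] {J : Type*}
    (E T : J → Set Z) (hEc : ∀ j, IsClosed (E j)) (hTo : ∀ j, IsOpen (T j))
    (hET : ∀ j, E j ⊆ T j)
    (hdisj : ∀ j j', j ≠ j' → Disjoint (E j) (E j'))
    (hT : LocallyFinite T) :
    ∃ O : J → Set Z, (∀ j, IsOpen (O j)) ∧ (∀ j, E j ⊆ O j) ∧ (∀ j, O j ⊆ T j) ∧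
      ∀ j j', j ≠ j' → Disjoint (O j) (O j') := by
  classical
  have hE : LocallyFinite E := hT.subset hET
  set K : J → Set Z := fun j => ⋃ j', if j' = j then ∅ else E j' with hK
  have hKc : ∀ j, IsClosed (K j) := by
    intro j
    refine LocallyFinite.isClosed_iUnion (hE.subset ?_) ?_
    · intro j'; split
      · exact Set.empty_subset _
      · exact le_rfl
    · intro j'; split
      · exact isClosed_empty
      · exact hEc j'
  have hEK : ∀ j, E j ⊆ T j ∩ (K j)ᶜ := by
    intro j z hz
    refine ⟨hET j hz, fun hzK => ?_⟩
    obtain ⟨S, ⟨j', rfl⟩, hj'⟩ := hzK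
    by_cases h : j' = j
    · simp only [if_pos h] at hj'
      exact hj'
    · simp only [if_neg h] at hj'
      exact Set.disjoint_left.mp (hdisj j' j h) hj' hz
  have hsep := fun j =>
    normal_exists_closure_subset (hEc j) ((hTo j).inter (hKc j).isOpen_compl) (hEK j)
  choose U hUo hEU hUcl using hsep
  have hUT : ∀ j, U j ⊆ T j :=
    fun j => (subset_closure.trans (hUcl j)).trans Set.inter_subset_left
  have hUclT : ∀ j, closure (U j) ⊆ T j := fun j => (hUcl j).trans Set.inter_subset_left
  have hUlf : LocallyFinite fun j => closure (U j) := hT.subset hUclT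
  set L : J → Set Z := fun j => ⋃ j', if j' = j then ∅ else closure (U j') with hL
  have hLc : ∀ j, IsClosed (L j) := by
    intro j
    refine LocallyFinite.isClosed_iUnion (hUlf.subset ?_) ?_
    · intro j'; split
      · exact Set.empty_subset _
      · exact le_rfl
    · intro j'; split
      · exact isClosed_empty
      · exact isClosed_closure
  refine ⟨fun j => U j ∩ (L j)ᶜ, fun j => (hUo j).inter (hLc j).isOpen_compl,
    ?_, fun j => Set.inter_subset_left.trans (hUT j), ?_⟩
  · intro j z hz
    refine ⟨hEU j hz, fun hzL => ?_⟩
    obtain ⟨S, ⟨j', rfl⟩, hj'⟩ := hzL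
    by_cases h : j' = j
    · simp only [if_pos h] at hj'
      exact hj'
    · simp only [if_neg h] at hj'
      have : z ∈ (K j')ᶜ := ((hUcl j') hj').2
      apply this
      exact Set.mem_iUnion.mpr ⟨j, by rw [if_neg (fun hh => h hh.symm)]; exact hz⟩
  · intro j j' hne
    rw [Set.disjoint_left]
    rintro z ⟨hzU, hzL⟩ ⟨hzU', hzL'⟩
    apply hzL'
    exact Set.mem_iUnion.mpr ⟨j, by rw [if_neg hne]; exact subset_closure hzU⟩

end Auxiliary

/-- Over a Hausdorff paracompact base of finite covering dimension, a sheaf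
of modules that is locally free of rank `N₀` near every point is free of rank `N₀` on each
member of some finite open cover. -/
theorem finite_cover_free_of_locally_free {Y : TopCat}
    [T2Space Y] [ParacompactSpace Y]
    (hdim : ∃ N : ℕ, HasCoveringDimLE Y N)
    (D : SheafModulePair Y) (N₀ : ℕ)
    (hloc : ∀ x : Y, ∃ U : Opens Y, x ∈ U ∧ D.IsFreeOfRankOn N₀ U) :
    ∃ 𝒱 : Finset (Opens Y), (∀ V ∈ 𝒱, D.IsFreeOfRankOn N₀ V) ∧
      ∀ x : Y, ∃ V ∈ 𝒱, x ∈ V := by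
  classical
  obtain ⟨N, hN⟩ := hdim
  choose Ux hxU hUfree using hloc
  obtain ⟨𝒲, h𝒲o, h𝒲U, h𝒲ref, h𝒲pt⟩ := hN (Set.range fun x => (Ux x : Set Y))
    (by rintro _ ⟨x, rfl⟩; exact (Ux x).2)
    (by
      rw [Set.sUnion_range]
      exact Set.iUnion_eq_univ_iff.mpr fun y => ⟨y, hxU y⟩)
  obtain ⟨A, hAo, hAU, hAlf, hAsub⟩ := precise_refinement (fun i : ↥𝒲 => (i : Set Y))
    (fun i => h𝒲o i i.2) (by rw [← Set.sUnion_eq_iUnion]; exact h𝒲U)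
  have hAfree : ∀ i : ↥𝒲, ∃ Uo : Opens Y, A i ⊆ (Uo : Set Y) ∧ D.IsFreeOfRankOn N₀ Uo := by
    intro i
    obtain ⟨u, hu, hsub⟩ := h𝒲ref i i.2
    obtain ⟨x, rfl⟩ := hu
    exact ⟨Ux x, (hAsub i).trans hsub, hUfree x⟩
  choose UA hUA hUAfree using hAfree
  have hptA : ∀ y : Y, {i : ↥𝒲 | y ∈ A i}.Finite ∧ {i : ↥𝒲 | y ∈ A i}.ncard ≤ N := by
    intro y
    have hsub : {i : ↥𝒲 | y ∈ A i} ⊆ (fun i : ↥𝒲 => (i : Set Y)) ⁻¹' {V | V ∈ 𝒲 ∧ y ∈ V} := by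
      intro i hi
      exact ⟨i.2, hAsub i hi⟩
    have hfin0 : {V | V ∈ 𝒲 ∧ y ∈ V}.Finite := (h𝒲pt y).1
    have hfin : {i : ↥𝒲 | y ∈ A i}.Finite :=
      ((hfin0.preimage (Subtype.val_injective.injOn)).subset hsub)
    refine ⟨hfin, ?_⟩
    calc {i : ↥𝒲 | y ∈ A i}.ncard
        = ((fun i : ↥𝒲 => (i : Set Y)) '' {i : ↥𝒲 | y ∈ A i}).ncard :=
          (Set.ncard_image_of_injOn (Subtype.val_injective.injOn)).symm
      _ ≤ {V | V ∈ 𝒲 ∧ y ∈ V}.ncard := by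
          refine Set.ncard_le_ncard ?_ hfin0
          rintro _ ⟨i, hi, rfl⟩
          exact ⟨i.2, hAsub i hi⟩
      _ ≤ N := (h𝒲pt y).2
  obtain ⟨v, hvU, hvo, hvcl⟩ := exists_iUnion_eq_closure_subset hAo (fun y => (hptA y).1) hAU
  set F : ↥𝒲 → Set Y := fun i => closure (v i) with hFdef
  have hFc : ∀ i, IsClosed (F i) := fun i => isClosed_closure
  have hFA : ∀ i, F i ⊆ A i := hvcl
  have hFcov : ∀ y : Y, ∃ i, y ∈ F i := by
    intro y
    have hy : y ∈ ⋃ i, v i := hvU ▸ Set.mem_univ y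
    obtain ⟨i, hi⟩ := Set.mem_iUnion.mp hy
    exact ⟨i, subset_closure hi⟩
  set τ : Y → Set ↥𝒲 := fun y => {i | y ∈ F i} with hτdef
  have hτfin : ∀ y, (τ y).Finite := fun y => (hptA y).1.subset (fun i hi => hFA i hi)
  have hτcard : ∀ y, (τ y).ncard ≤ N := fun y =>
    le_trans (Set.ncard_le_ncard (fun i hi => hFA i hi) (hptA y).1) (hptA y).2
  have key : ∀ d : ℕ, d ≤ N → ∃ 𝒢 : Finset (Opens Y),
      (∀ V ∈ 𝒢, D.IsFreeOfRankOn N₀ V) ∧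
      ∀ y : Y, N - d < (τ y).ncard → ∃ V ∈ 𝒢, y ∈ V := by
    intro d
    induction d with
    | zero =>
      intro _
      refine ⟨∅, by simp, fun y hy => ?_⟩
      exact absurd hy (by simp only [Nat.sub_zero]; exact Nat.not_lt.mpr (hτcard y))
    | succ d ih =>
      intro hdN
      obtain ⟨𝒢, h𝒢free, h𝒢cov⟩ := ih (Nat.le_of_succ_le hdN)
      set k := N - (d + 1) with hk
      set G : Set Y := ⋃ V ∈ 𝒢, (V : Set Y) with hG
      have hGo : IsOpen G := isOpen_biUnion (fun V _ => V.2)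
      set Es : {σ : Finset ↥𝒲 // σ.card = k + 1} → Set Y :=
        fun σ => (⋂ i ∈ σ.1, F i) \ G with hEs
      set Ts : {σ : Finset ↥𝒲 // σ.card = k + 1} → Set Y :=
        fun σ => ⋂ i ∈ σ.1, A i with hTs
      have hσne : ∀ σ : {σ : Finset ↥𝒲 // σ.card = k + 1}, σ.1.Nonempty :=
        fun σ => Finset.card_pos.mp (by rw [σ.2]; omega)
      have hEsc : ∀ σ, IsClosed (Es σ) :=
        fun σ => (isClosed_biInter (fun i _ => hFc i)).sdiff hGo
      have hTso : ∀ σ, IsOpen (Ts σ) :=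
        fun σ => Set.Finite.isOpen_biInter (σ.1.finite_toSet) (fun i _ => hAo i)
      have hEsT : ∀ σ, Es σ ⊆ Ts σ := by
        intro σ z hz
        exact Set.mem_iInter₂.mpr fun i hi => hFA i (Set.mem_iInter₂.mp hz.1 i hi)
      have hEsτ : ∀ σ, ∀ z ∈ Es σ, ↑σ.1 ⊆ τ z :=
        fun σ z hz i hi => Set.mem_iInter₂.mp hz.1 i hi
      have hndG : ∀ z, k + 1 < (τ z).ncard → ∃ V ∈ 𝒢, z ∈ V := by
        intro z hz
        refine h𝒢cov z ?_
        omega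
      have hdisj : ∀ σ σ', σ ≠ σ' → Disjoint (Es σ) (Es σ') := by
        intro σ σ' hne
        rw [Set.disjoint_left]
        intro z hz hz'
        have h1 : ↑(σ.1 ∪ σ'.1) ⊆ τ z := by
          rw [Finset.coe_union]
          exact Set.union_subset (hEsτ σ z hz) (hEsτ σ' z hz')
        have hssub : σ.1 ⊂ σ.1 ∪ σ'.1 := by
          refine Finset.ssubset_iff_subset_ne.mpr ⟨Finset.subset_union_left, ?_⟩
          intro hEq
          apply hne
          have h2 : σ'.1 ⊆ σ.1 := hEq ▸ Finset.subset_union_right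
          exact (Subtype.ext (Finset.eq_of_subset_of_card_le h2 (by rw [σ.2, σ'.2])).symm)
        have hcard : k + 1 < (σ.1 ∪ σ'.1).card := by
          have h3 := Finset.card_lt_card hssub
          have h4 := σ.2
          omega
        have hlt : k + 1 < (τ z).ncard := by
          refine lt_of_lt_of_le hcard ?_
          rw [← Set.ncard_coe_finset]
          exact Set.ncard_le_ncard h1 (hτfin z)
        obtain ⟨V, hV𝒢, hzV⟩ := hndG z hlt
        exact hz.2 (Set.mem_biUnion hV𝒢 hzV)
      have hTlf : LocallyFinite Ts := by
        intro y
        obtain ⟨n, hn, hfin⟩ := hAlf y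
        refine ⟨n, hn, ?_⟩
        have hsub : {σ : {σ : Finset ↥𝒲 // σ.card = k + 1} | (Ts σ ∩ n).Nonempty} ⊆
            (fun σ : {σ : Finset ↥𝒲 // σ.card = k + 1} => σ.1) ⁻¹'
              {s : Finset ↥𝒲 | ↑s ⊆ {i | (A i ∩ n).Nonempty}} := by
          rintro σ ⟨z, hz1, hz2⟩ i hi
          exact ⟨z, Set.mem_iInter₂.mp hz1 i hi, hz2⟩
        refine Set.Finite.subset (Set.Finite.preimage (Subtype.val_injective.injOn) ?_) hsub
        have heq : {s : Finset ↥𝒲 | ↑s ⊆ {i | (A i ∩ n).Nonempty}} =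
            (fun s : Finset ↥𝒲 => (↑s : Set ↥𝒲)) ⁻¹' {t | t ⊆ {i | (A i ∩ n).Nonempty}} := rfl
        rw [heq]
        exact Set.Finite.preimage (Finset.coe_injective.injOn) hfin.finite_subsets
      obtain ⟨O, hOo, hEO, hOT, hOdisj⟩ := separation_lemma Es Ts hEsc hTso hEsT hdisj hTlf
      set Wk : Opens Y := ⨆ σ, ⟨O σ, hOo σ⟩ with hWk
      have hWkfree : D.IsFreeOfRankOn N₀ Wk := by
        refine D.isFreeOfRankOn_iSup _ ?_ ?_
        · intro σ σ' hne z hz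
          have hz' : z ∈ O σ ∩ O σ' := hz
          exact absurd hz'.2 (Set.disjoint_left.mp (hOdisj σ σ' hne) hz'.1)
        · intro σ
          obtain ⟨i0, hi0⟩ := hσne σ
          refine D.freeMono (hUAfree i0) ?_
          intro z hz
          exact hUA i0 (Set.mem_iInter₂.mp (hOT σ hz) i0 hi0)
      refine ⟨insert Wk 𝒢, ?_, ?_⟩
      · intro V hV
        rcases Finset.mem_insert.mp hV with rfl | hV'
        · exact hWkfree
        · exact h𝒢free V hV'
      · intro y hy
        rcases Nat.lt_or_ge (k + 1) ((τ y).ncard) with hgt | hle2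
        · obtain ⟨V, hV, hyV⟩ := hndG y hgt
          exact ⟨V, Finset.mem_insert_of_mem hV, hyV⟩
        · by_cases hyG : y ∈ G
          · obtain ⟨V, hV𝒢, hyV⟩ := Set.mem_iUnion₂.mp hyG
            exact ⟨V, Finset.mem_insert_of_mem hV𝒢, hyV⟩
          · have hcard : ((hτfin y).toFinset).card = k + 1 := by
              have h1 : (τ y).ncard = ((hτfin y).toFinset).card :=
                Set.ncard_eq_toFinset_card _ (hτfin y)
              omega
            have hyE : y ∈ Es ⟨(hτfin y).toFinset, hcard⟩ := by
              refine ⟨Set.mem_iInter₂.mpr fun i hi => ?_, hyG⟩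
              exact ((hτfin y).mem_toFinset).mp hi
            refine ⟨Wk, Finset.mem_insert_self _ _, ?_⟩
            exact Opens.mem_iSup.mpr ⟨⟨(hτfin y).toFinset, hcard⟩, hEO _ hyE⟩
  obtain ⟨𝒢, hfree, hcov⟩ := key N le_rfl
  refine ⟨𝒢, hfree, fun y => ?_⟩
  refine hcov y ?_
  obtain ⟨i, hi⟩ := hFcov y
  have hne : (τ y).Nonempty := ⟨i, hi⟩
  have hpos : 0 < (τ y).ncard := (Set.ncard_pos (hτfin y)).mpr hne
  omega
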